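/- arXiv:1311.0479 — 6 statements merged into one kernel-verified Lean document; each statement's English description precedes it below -/
import Mathlib

section
/- For the directed path P_n, the set majority out-domination number γ⁺ₘ(P_n) equals ⌈n/4⌉. -/
/-- Closed out-neighborhood `N⁺[S]` of a set `S` in the digraph with arc relation `A`. -/
noncomputable def closedOut {V : Type*} [Fintype V] [DecidableEq V]
    (A : V → V → Prop) (S : Finset V) : Finset V :=
  S ∪ @Finset.filter _ (fun v => ∃ u ∈ S, A u v) (Classical.decPred _) Finset.univ

/-- `S` is a majority out-dominating set: `|N⁺[S]| ≥ n/2`. -/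
def IsMODS {V : Type*} [Fintype V] [DecidableEq V]
    (A : V → V → Prop) (S : Finset V) : Prop :=
  2 * (closedOut A S).card ≥ Fintype.card V

/-- Set majority out-domination number `γ⁺ₘ`. -/
noncomputable def gammaM {V : Type*} [Fintype V] [DecidableEq V]
    (A : V → V → Prop) : ℕ :=
  sInf {k | ∃ S : Finset V, IsMODS A S ∧ S.card = k}

/-- Out-domination number `γ⁺`. -/
noncomputable def gammaPlus {V : Type*} [Fintype V] [DecidableEq V]
    (A : V → V → Prop) : ℕ :=
  sInf {k | ∃ S : Finset V, closedOut A S = Finset.univ ∧ S.card = k}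

/-- Out-degree of a vertex. -/
noncomputable def outDeg {V : Type*} [Fintype V] [DecidableEq V]
    (A : V → V → Prop) (v : V) : ℕ :=
  (@Finset.filter _ (fun w => A v w) (Classical.decPred _) Finset.univ).card

/-- Maximum out-degree `Δ⁺`. -/
noncomputable def DeltaPlus {V : Type*} [Fintype V] [DecidableEq V]
    (A : V → V → Prop) : ℕ :=
  Finset.univ.sup (outDeg A)


/-- For the directed path on n vertices, the set majority out-domination number is `⌈n/4⌉`. -/
theorem stmt3 (n : ℕ) (hn : 1 ≤ n) :
    gammaM (fun i j : Fin n => (i : ℕ) + 1 = (j : ℕ)) = (n + 3) / 4 := by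
  set A : Fin n → Fin n → Prop := fun i j => (i : ℕ) + 1 = (j : ℕ) with hA
  set k := (n + 3) / 4 with hk
  have hmem : k ∈ {m | ∃ S : Finset (Fin n), IsMODS A S ∧ S.card = m} := by
    have hf : ∀ i : ℕ, 2 * i % n < n := fun i => Nat.mod_lt _ (by omega)
    set f : ℕ → Fin n := fun i => ⟨2 * i % n, hf i⟩ with hfdef
    have hval : ∀ i < k, (f i : ℕ) = 2 * i := by
      intro i hi
      have : 2 * i < n := by omega
      simp [hfdef, Nat.mod_eq_of_lt this]
    set S : Finset (Fin n) := (Finset.range k).image f with hS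
    have hcard : S.card = k := by
      rw [hS, Finset.card_image_of_injOn, Finset.card_range]
      intro i hi j hj hij
      simp only [Finset.mem_coe, Finset.mem_range] at hi hj
      have h1 := hval i hi
      have h2 := hval j hj
      have : (f i : ℕ) = (f j : ℕ) := by rw [hij]
      omega
    refine ⟨S, ?_, hcard⟩
    -- every index < min (2*k) n is in closedOut A S
    have hg : ∀ j : ℕ, j % n < n := fun j => Nat.mod_lt _ (by omega)
    set g : ℕ → Fin n := fun j => ⟨j % n, hg j⟩ with hgdef
    have hsub : (Finset.range (min (2 * k) n)).image g ⊆ closedOut A S := by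
      intro v hv
      simp only [Finset.mem_image, Finset.mem_range] at hv
      obtain ⟨j, hj, rfl⟩ := hv
      have hjn : j < n := by omega
      have hgv : (g j : ℕ) = j := by simp [hgdef, Nat.mod_eq_of_lt hjn]
      rcases Nat.even_or_odd j with ⟨i, hi⟩ | ⟨i, hi⟩
      · -- j = 2*i, in S
        have hik : i < k := by omega
        have : g j = f i := by
          apply Fin.ext
          rw [hgv, hval i hik]; omega
        simp only [closedOut, Finset.mem_union]
        left
        rw [this, hS]
        exact Finset.mem_image.mpr ⟨i, Finset.mem_range.mpr hik, rfl⟩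
      · -- j = 2*i+1, successor of f i
        have hik : i < k := by omega
        simp only [closedOut, Finset.mem_union, Finset.mem_filter, Finset.mem_univ,
          true_and]
        right
        refine ⟨f i, Finset.mem_image.mpr ⟨i, Finset.mem_range.mpr hik, rfl⟩, ?_⟩
        show (f i : ℕ) + 1 = (g j : ℕ)
        rw [hval i hik, hgv]; omega
    have hgcard : ((Finset.range (min (2 * k) n)).image g).card = min (2 * k) n := by
      rw [Finset.card_image_of_injOn, Finset.card_range]
      intro i hi j hj hij
      simp only [Finset.mem_coe, Finset.mem_range] at hi hj
      have : (g i : ℕ) = (g j : ℕ) := by rw [hij]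
      simp only [hgdef] at this
      rw [Nat.mod_eq_of_lt (by omega), Nat.mod_eq_of_lt (by omega)] at this
      exact this
    have hle : min (2 * k) n ≤ (closedOut A S).card := by
      rw [← hgcard]; exact Finset.card_le_card hsub
    show 2 * (closedOut A S).card ≥ Fintype.card (Fin n)
    rw [Fintype.card_fin]
    have h4k : 4 * k ≥ n := by omega
    omega
  have hne : {m | ∃ S : Finset (Fin n), IsMODS A S ∧ S.card = m}.Nonempty := ⟨k, hmem⟩
  apply le_antisymm
  · -- gammaM ≤ k
    exact Nat.sInf_le hmem
  · -- k ≤ gammaM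
    have hmm := Nat.sInf_mem hne
    obtain ⟨S, hmods, hcard⟩ := hmm
    have hf' : ∀ u : Fin n, ((u : ℕ) + 1) % n < n := fun u => Nat.mod_lt _ (by omega)
    set f' : Fin n → Fin n := fun u => ⟨((u : ℕ) + 1) % n, hf' u⟩ with hf'def
    have hsub : closedOut A S ⊆ S ∪ S.image f' := by
      intro v hv
      simp only [closedOut, Finset.mem_union, Finset.mem_filter, Finset.mem_univ,
        true_and] at hv ⊢
      rcases hv with h | ⟨u, hu, huv⟩
      · exact Or.inl h
      · right
        refine Finset.mem_image.mpr ⟨u, hu, ?_⟩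
        apply Fin.ext
        show ((u : ℕ) + 1) % n = (v : ℕ)
        have : (u : ℕ) + 1 = (v : ℕ) := huv
        rw [this, Nat.mod_eq_of_lt v.isLt]
    have hc : (closedOut A S).card ≤ 2 * S.card := by
      calc (closedOut A S).card ≤ (S ∪ S.image f').card := Finset.card_le_card hsub
        _ ≤ S.card + (S.image f').card := Finset.card_union_le _ _
        _ ≤ S.card + S.card := by
            exact Nat.add_le_add_left (Finset.card_image_le) _
        _ = 2 * S.card := by ring
    have hn4 : n ≤ 4 * S.card := by
      have := hmods
      simp only [IsMODS, Fintype.card_fin, ge_iff_le] at this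
      omega
    rw [hk]
    unfold gammaM
    omega
end

section
/- For the directed cycle C_n (n ≥ 3), the set majority out-domination number γ⁺ₘ(C_n) equals ⌈n/4⌉. -/
/-- For the directed cycle on n ≥ 3 vertices, the set majority out-domination number is `⌈n/4⌉`. -/
theorem stmt4 (n : ℕ) (hn : 3 ≤ n) :
    gammaM (fun i j : Fin n => (j : ℕ) = ((i : ℕ) + 1) % n) = (n + 3) / 4 := by
  have hn0 : 0 < n := by omega
  set A : Fin n → Fin n → Prop := fun i j => (j : ℕ) = ((i : ℕ) + 1) % n with hA
  set k := (n + 3) / 4 with hk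
  have hk1 : n ≤ 4 * k := by omega
  have hk2 : 4 * k ≤ n + 3 := by omega
  set f : ℕ → Fin n := fun j => ⟨j % n, Nat.mod_lt _ hn0⟩ with hf
  have hfval : ∀ j, j < n → (f j : ℕ) = j := fun j hj => Nat.mod_eq_of_lt hj
  set S₀ : Finset (Fin n) := (Finset.range k).image (fun i => f (2 * i)) with hS₀
  have hcard : S₀.card = k := by
    rw [hS₀, Finset.card_image_of_injOn, Finset.card_range]
    intro a ha b hb hab
    simp only [Finset.coe_range, Set.mem_Iio] at ha hb
    have h1 := hfval (2 * a) (by omega)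
    have h2 := hfval (2 * b) (by omega)
    have : (f (2 * a) : ℕ) = (f (2 * b) : ℕ) := congrArg Fin.val hab
    omega
  have hmods : IsMODS A S₀ := by
    have hsub : (Finset.range (2 * k)).image f ⊆ closedOut A S₀ := by
      intro v hv
      obtain ⟨j, hj, rfl⟩ := Finset.mem_image.mp hv
      rw [Finset.mem_range] at hj
      have hjn : j < n := by omega
      rcases Nat.even_or_odd j with ⟨i, hi⟩ | ⟨i, hi⟩
      · apply Finset.mem_union_left
        exact Finset.mem_image.mpr ⟨i, Finset.mem_range.mpr (by omega), by rw [hi]; ring_nf⟩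
      · apply Finset.mem_union_right
        refine (@Finset.mem_filter _ _ (Classical.decPred _) _ _).mpr
          ⟨Finset.mem_univ _, f (2 * i), ?_, ?_⟩
        · exact Finset.mem_image.mpr ⟨i, Finset.mem_range.mpr (by omega), rfl⟩
        · show (f j : ℕ) = ((f (2 * i) : ℕ) + 1) % n
          rw [hfval j hjn, hfval (2 * i) (by omega), hi, Nat.mod_eq_of_lt (by omega)]
    have hcard2 : ((Finset.range (2 * k)).image f).card = 2 * k := by
      rw [Finset.card_image_of_injOn, Finset.card_range]
      intro a ha b hb hab
      simp only [Finset.coe_range, Set.mem_Iio] at ha hb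
      have h1 := hfval a (by omega)
      have h2 := hfval b (by omega)
      have : (f a : ℕ) = (f b : ℕ) := congrArg Fin.val hab
      omega
    have := Finset.card_le_card hsub
    unfold IsMODS
    rw [Fintype.card_fin]
    omega
  apply le_antisymm
  · exact Nat.sInf_le ⟨S₀, hmods, hcard⟩
  · have hne : k ∈ {m | ∃ S : Finset (Fin n), IsMODS A S ∧ S.card = m} :=
      ⟨S₀, hmods, hcard⟩
    apply le_csInf ⟨k, hne⟩
    intro m hm
    simp only [Set.mem_setOf_eq] at hm
    obtain ⟨S, hS, rfl⟩ := hm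
    -- closedOut card ≤ 2 * S.card
    have hsub : (@Finset.filter _ (fun v => ∃ u ∈ S, A u v) (Classical.decPred _) Finset.univ)
        ⊆ S.image (fun u : Fin n => f ((u : ℕ) + 1)) := by
      intro v hv
      obtain ⟨-, u, hu, hv⟩ := (@Finset.mem_filter _ _ (Classical.decPred _) _ _).mp hv
      exact Finset.mem_image.mpr ⟨u, hu, Fin.ext (by simpa using hv.symm)⟩
    have h1 : (closedOut A S).card ≤ S.card + S.card := by
      calc (closedOut A S).card ≤ S.card +
          (@Finset.filter _ (fun v => ∃ u ∈ S, A u v) (Classical.decPred _) Finset.univ).card :=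
            Finset.card_union_le _ _
        _ ≤ S.card + (S.image (fun u : Fin n => f ((u : ℕ) + 1))).card := by
            exact Nat.add_le_add_left (Finset.card_le_card hsub) _
        _ ≤ S.card + S.card := Nat.add_le_add_left (Finset.card_image_le) _
    have h2 : 2 * (closedOut A S).card ≥ Fintype.card (Fin n) := hS
    rw [Fintype.card_fin] at h2
    omega
end

section
/- If a digraph D on n vertices has a hamiltonian directed cycle, then γ⁺ₘ(D) ≤ ⌈n/4⌉. -/
lemma mem_closedOut {V : Type*} [Fintype V] [DecidableEq V]
    (A : V → V → Prop) (S : Finset V) (v : V) :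
    v ∈ closedOut A S ↔ v ∈ S ∨ ∃ u ∈ S, A u v := by
  simp [closedOut]

/-- Any digraph with a hamiltonian directed cycle satisfies `γ⁺ₘ(D) ≤ ⌈n/4⌉`. -/
theorem stmt5 {V : Type*} [Fintype V] [DecidableEq V]
    (A : V → V → Prop) (f : Fin (Fintype.card V) → V)
    (hf : Function.Bijective f)
    (harc : ∀ i : Fin (Fintype.card V),
      A (f i) (f ⟨((i : ℕ) + 1) % Fintype.card V, Nat.mod_lt _ i.pos⟩)) :
    gammaM A ≤ (Fintype.card V + 3) / 4 := by
  classical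
  have hj : ∀ j : ℕ, j < (Fintype.card V + 3) / 4 → 2 * j < Fintype.card V := by omega
  have hm : min (2 * ((Fintype.card V + 3) / 4)) (Fintype.card V) ≤ Fintype.card V :=
    min_le_right _ _
  let S : Finset V := Finset.image (fun j : Fin ((Fintype.card V + 3) / 4) => f ⟨2 * j, hj j j.2⟩) Finset.univ
  let g : Fin (min (2 * ((Fintype.card V + 3) / 4)) (Fintype.card V)) → V := fun i => f ⟨i, lt_of_lt_of_le i.2 hm⟩
  have hginj : Function.Injective g := by
    intro a b hab
    have hab' : f ⟨(a : ℕ), lt_of_lt_of_le a.2 hm⟩ = f ⟨(b : ℕ), lt_of_lt_of_le b.2 hm⟩ := hab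
    have h2 := hf.1 hab'
    exact Fin.ext (by simpa [Fin.ext_iff] using h2)
  let T : Finset V := Finset.image g Finset.univ
  have hTcard : T.card = min (2 * ((Fintype.card V + 3) / 4)) (Fintype.card V) := by
    rw [Finset.card_image_of_injective _ hginj, Finset.card_univ, Fintype.card_fin]
  have hTsub : T ⊆ closedOut A S := by
    intro x hx
    rw [Finset.mem_image] at hx
    obtain ⟨i, -, rfl⟩ := hx
    have hi2k : (i : ℕ) < 2 * ((Fintype.card V + 3) / 4) := lt_of_lt_of_le i.2 (min_le_left _ _)
    have hin : (i : ℕ) < Fintype.card V := lt_of_lt_of_le i.2 hm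
    rw [mem_closedOut]
    rcases Nat.even_or_odd (i : ℕ) with ⟨j, hje⟩ | ⟨j, hjo⟩
    · left
      have hjk : j < (Fintype.card V + 3) / 4 := by omega
      rw [Finset.mem_image]
      refine ⟨⟨j, hjk⟩, Finset.mem_univ _, ?_⟩
      show f _ = f _
      congr 1
      exact Fin.ext (by simp; omega)
    · right
      have hjk : j < (Fintype.card V + 3) / 4 := by omega
      refine ⟨f ⟨2 * j, hj j hjk⟩, ?_, ?_⟩
      · rw [Finset.mem_image]
        exact ⟨⟨j, hjk⟩, Finset.mem_univ _, rfl⟩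
      · have harc' := harc ⟨2 * j, hj j hjk⟩
        have heq : (⟨((2 * j : ℕ) + 1) % Fintype.card V, Nat.mod_lt _ (Fin.pos (⟨2 * j, hj j hjk⟩ : Fin (Fintype.card V)))⟩ : Fin (Fintype.card V))
            = ⟨i, hin⟩ := by
          apply Fin.ext
          show (2 * j + 1) % Fintype.card V = (i : ℕ)
          rw [Nat.mod_eq_of_lt (by omega)]
          omega
        rw [heq] at harc'
        show A (f ⟨2 * j, hj j hjk⟩) (f ⟨(i : ℕ), lt_of_lt_of_le i.2 hm⟩)
        exact harc'
  have hMODS : IsMODS A S := by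
    have h1 : T.card ≤ (closedOut A S).card := Finset.card_le_card hTsub
    show 2 * (closedOut A S).card ≥ Fintype.card V
    rw [hTcard] at h1
    omega
  have h1 : gammaM A ≤ S.card := Nat.sInf_le ⟨S, hMODS, rfl⟩
  have h2 : S.card ≤ (Fintype.card V + 3) / 4 := by
    calc S.card ≤ (Finset.univ : Finset (Fin ((Fintype.card V + 3) / 4))).card := Finset.card_image_le
    _ = (Fintype.card V + 3) / 4 := by simp
  omega
end

section
/- For any digraph D on n vertices containing a directed cycle, if c(D) denotes the length of a longest directed cycle in D, then γ⁺ₘ(D) ≤ ⌈(2n − c(D))/4⌉. -/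
lemma closedOut_mono {V : Type*} [Fintype V] [DecidableEq V]
    (A : V → V → Prop) {S T : Finset V} (h : S ⊆ T) :
    closedOut A S ⊆ closedOut A T := by
  intro v hv
  simp only [closedOut, Finset.mem_union, Finset.mem_filter, Finset.mem_univ, true_and] at hv ⊢
  rcases hv with h1 | ⟨u, hu, hA⟩
  · exact Or.inl (h h1)
  · exact Or.inr ⟨u, h hu, hA⟩

lemma subset_closedOut {V : Type*} [Fintype V] [DecidableEq V]
    (A : V → V → Prop) (S : Finset V) : S ⊆ closedOut A S :=
  Finset.subset_union_left

lemma augment {V : Type*} [Fintype V] [DecidableEq V]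
    (A : V → V → Prop) (t : ℕ) (S : Finset V) :
    ∃ T : Finset V, T.card ≤ S.card + t ∧
      min (Fintype.card V) ((closedOut A S).card + t) ≤ (closedOut A T).card := by
  induction t with
  | zero => exact ⟨S, by omega, by simp⟩
  | succ t ih =>
    obtain ⟨T, hcard, hcov⟩ := ih
    by_cases h : closedOut A T = Finset.univ
    · refine ⟨T, by omega, ?_⟩
      rw [h, Finset.card_univ]
      omega
    · obtain ⟨v, hv⟩ : ∃ v, v ∉ closedOut A T := by
        by_contra hco
        push_neg at hco
        exact h (Finset.eq_univ_iff_forall.mpr hco)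
      refine ⟨insert v T, ?_, ?_⟩
      · have := Finset.card_insert_le v T; omega
      · have hsub : insert v (closedOut A T) ⊆ closedOut A (insert v T) := by
          intro w hw
          rcases Finset.mem_insert.mp hw with rfl | hw
          · exact subset_closedOut A _ (Finset.mem_insert_self _ _)
          · exact closedOut_mono A (Finset.subset_insert _ _) hw
        have h2 := Finset.card_le_card hsub
        rw [Finset.card_insert_of_notMem hv] at h2
        have key : min (Fintype.card V) ((closedOut A S).card + (t+1)) ≤
            min (Fintype.card V) ((closedOut A S).card + t) + 1 := by
          rcases le_total (Fintype.card V) ((closedOut A S).card + t) with hle | hle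
          · rw [min_eq_left hle, min_eq_left (by omega)]; omega
          · rw [min_eq_right hle]
            exact min_le_of_right_le (by omega)
        exact le_trans key (le_trans (Nat.succ_le_succ hcov) h2)


/-- If `c` is the length of a longest directed cycle of `D`, then
`γ⁺ₘ(D) ≤ ⌈(2n - c)/4⌉`. -/
theorem stmt7 {V : Type*} [Fintype V] [DecidableEq V]
    (A : V → V → Prop) (c : ℕ)
    (hc : IsGreatest {m | 2 ≤ m ∧ ∃ f : Fin m → V, Function.Injective f ∧
      ∀ i : Fin m, A (f i) (f ⟨((i : ℕ) + 1) % m, Nat.mod_lt _ i.pos⟩)} c) :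
    gammaM A ≤ (2 * Fintype.card V - c + 3) / 4 := by
  obtain ⟨⟨hc2, f, hfinj, hfc⟩, -⟩ := hc
  have hcn : c ≤ Fintype.card V := by
    simpa using Fintype.card_le_of_injective f hfinj
  obtain ⟨k, hk1, hk2, hk3⟩ : ∃ k, k ≤ c/2 ∧ k ≤ (Fintype.card V + 3)/4 ∧
      (k = c/2 ∨ k = (Fintype.card V + 3)/4) :=
    ⟨min (c/2) ((Fintype.card V + 3)/4), min_le_left _ _, min_le_right _ _, min_choice _ _⟩
  have hklt : ∀ i : Fin k, 2 * (i:ℕ) < c := fun i => by have := i.2; omega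
  have hjlt : ∀ j : Fin (2*k), (j:ℕ) < c := fun j => by have := j.2; omega
  set g : Fin k → V := fun i => f ⟨2*i, hklt i⟩ with hg
  have hginj : Function.Injective g := by
    intro a b hab
    have h1 := hfinj hab
    have h2 : 2*(a:ℕ) = 2*(b:ℕ) := by injection h1
    exact Fin.ext (by omega)
  have hS0card : (Finset.image g Finset.univ).card = k := by
    rw [Finset.card_image_of_injective _ hginj, Finset.card_univ, Fintype.card_fin]
  have hcov : 2 * k ≤ (closedOut A (Finset.image g Finset.univ)).card := by
    set g2 : Fin (2*k) → V := fun j => f ⟨j, hjlt j⟩ with hg2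
    have hg2inj : Function.Injective g2 := by
      intro a b hab
      have h1 := hfinj hab
      have h2 : (a:ℕ) = (b:ℕ) := by injection h1
      exact Fin.ext h2
    have hsub : Finset.image g2 Finset.univ ⊆ closedOut A (Finset.image g Finset.univ) := by
      intro w hw
      obtain ⟨j, -, rfl⟩ := Finset.mem_image.mp hw
      simp only [closedOut, Finset.mem_union, Finset.mem_filter, Finset.mem_univ, true_and]
      rcases Nat.even_or_odd (j:ℕ) with ⟨i, hi⟩ | ⟨i, hi⟩
      · left
        apply Finset.mem_image.mpr
        refine ⟨⟨i, by have := j.2; omega⟩, Finset.mem_univ _, ?_⟩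
        simp only [hg, hg2]
        congr 1
        exact Fin.ext (by simp only []; omega)
      · right
        have hjc := hjlt j
        refine ⟨g ⟨i, by have := j.2; omega⟩, Finset.mem_image_of_mem _ (Finset.mem_univ _), ?_⟩
        have harc := hfc ⟨2*i, by omega⟩
        simp only [hg, hg2]
        convert harc using 2
        exact Fin.ext (by simp only [Nat.mod_eq_of_lt (show 2*i+1 < c by omega)]; omega)
    calc 2*k = (Finset.image g2 Finset.univ).card := by
          rw [Finset.card_image_of_injective _ hg2inj, Finset.card_univ, Fintype.card_fin]
      _ ≤ _ := Finset.card_le_card hsub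
  obtain ⟨T, hT1, hT2⟩ := augment A ((Fintype.card V + 1)/2 - 2*k) (Finset.image g Finset.univ)
  have hMODS : IsMODS A T := by
    rw [IsMODS]
    rcases le_total (Fintype.card V)
        ((closedOut A (Finset.image g Finset.univ)).card + ((Fintype.card V + 1)/2 - 2*k))
        with hle | hle
    · rw [min_eq_left hle] at hT2
      omega
    · rw [min_eq_right hle] at hT2
      omega
  have hle2 : gammaM A ≤ T.card := Nat.sInf_le ⟨T, hMODS, rfl⟩
  refine le_trans hle2 (le_trans hT1 ?_)
  rw [hS0card]
  rcases hk3 with h | h <;> omega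
end

section
/- For any digraph D, γ⁺ₘ(D) ≤ ⌈γ⁺(D)/2⌉. -/
section OutDomination

variable {V : Type*} [Fintype V] [DecidableEq V] (A : V → V → Prop)

lemma closedOut_union (s t : Finset V) :
    closedOut A (s ∪ t) = closedOut A s ∪ closedOut A t := by
  ext v
  simp only [closedOut, Finset.mem_union, Finset.mem_filter, Finset.mem_univ, true_and,
    or_and_right, exists_or]
  exact or_or_or_comm

lemma closedOut_univ : closedOut A Finset.univ = Finset.univ :=
  Finset.eq_univ_of_forall fun v => Finset.mem_union_left _ (Finset.mem_univ v)

lemma exists_closedOut_eq_univ_card_eq_gammaPlus :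
    ∃ S : Finset V, closedOut A S = Finset.univ ∧ S.card = gammaPlus A := by
  have hne : {k | ∃ S : Finset V, closedOut A S = Finset.univ ∧ S.card = k}.Nonempty :=
    ⟨_, Finset.univ, closedOut_univ A, rfl⟩
  exact Nat.sInf_mem hne

lemma gammaM_le_card {S : Finset V} (hS : IsMODS A S) : gammaM A ≤ S.card :=
  Nat.sInf_le ⟨S, hS, rfl⟩

lemma isMODS_or_isMODS_of_closedOut_union_eq_univ {s t : Finset V}
    (h : closedOut A (s ∪ t) = Finset.univ) : IsMODS A s ∨ IsMODS A t := by
  have hcover : Fintype.card V ≤ (closedOut A s).card + (closedOut A t).card := by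
    rw [← Finset.card_univ, ← h, closedOut_union]
    exact Finset.card_union_le _ _
  unfold IsMODS
  omega

end OutDomination

lemma Finset.exists_subset_card_le_half_sdiff_card_le_half {α : Type*} [DecidableEq α]
    (S : Finset α) :
    ∃ T ⊆ S, T.card ≤ (S.card + 1) / 2 ∧ (S \ T).card ≤ (S.card + 1) / 2 := by
  obtain ⟨T, hTS, hT⟩ := Finset.exists_subset_card_eq (s := S) (n := (S.card + 1) / 2) (by omega)
  refine ⟨T, hTS, hT.le, ?_⟩
  rw [Finset.card_sdiff_of_subset hTS]
  omega

theorem stmt9_general {V : Type*} [Fintype V] [DecidableEq V]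
    (A : V → V → Prop) :
    gammaM A ≤ (gammaPlus A + 1) / 2 := by
  obtain ⟨S, hS, hcard⟩ := exists_closedOut_eq_univ_card_eq_gammaPlus A
  obtain ⟨T, hTS, hT, hST⟩ := S.exists_subset_card_le_half_sdiff_card_le_half
  rw [← Finset.union_sdiff_of_subset hTS] at hS
  rw [← hcard]
  rcases isMODS_or_isMODS_of_closedOut_union_eq_univ A hS with h | h
  · exact (gammaM_le_card A h).trans hT
  · exact (gammaM_le_card A h).trans hST

/-- `γ⁺ₘ(D) ≤ ⌈γ⁺(D)/2⌉`. -/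
theorem stmt9 {V : Type*} [Fintype V] [DecidableEq V]
    (A : V → V → Prop) (hloop : ∀ v, ¬ A v v) :
    gammaM A ≤ (gammaPlus A + 1) / 2 :=
  stmt9_general A
end

section
/- Let D be a digraph with γ⁺ₘ(D) = k and let e be an arc of D. Then k ≤ γ⁺ₘ(D − e) ≤ k + 1, where D − e is D with arc e removed. -/
lemma closedOut_mono_rel {V : Type*} [Fintype V] [DecidableEq V]
    {A B : V → V → Prop} (h : ∀ u v, A u v → B u v) (S : Finset V) :
    closedOut A S ⊆ closedOut B S := by
  intro v hv
  simp only [closedOut, Finset.mem_union, Finset.mem_filter, Finset.mem_univ, true_and] at hv ⊢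
  rcases hv with hv | ⟨u, hu, huv⟩
  · exact Or.inl hv
  · exact Or.inr ⟨u, hu, h u v huv⟩

lemma mods_univ {V : Type*} [Fintype V] [DecidableEq V] (A : V → V → Prop) :
    IsMODS A (Finset.univ : Finset V) := by
  have h : (closedOut A (Finset.univ : Finset V)) = Finset.univ := by
    apply Finset.eq_univ_of_forall
    intro v
    simp [closedOut]
  unfold IsMODS
  rw [h, Finset.card_univ]
  omega

lemma gammaM_nonempty {V : Type*} [Fintype V] [DecidableEq V] (A : V → V → Prop) :
    {k | ∃ S : Finset V, IsMODS A S ∧ S.card = k}.Nonempty :=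
  ⟨Fintype.card V, Finset.univ, mods_univ A, Finset.card_univ⟩

lemma gammaM_exists {V : Type*} [Fintype V] [DecidableEq V] (A : V → V → Prop) :
    ∃ S : Finset V, IsMODS A S ∧ S.card = gammaM A :=
  Nat.sInf_mem (gammaM_nonempty A)

lemma gammaM_le {V : Type*} [Fintype V] [DecidableEq V] {A : V → V → Prop}
    {S : Finset V} (h : IsMODS A S) : gammaM A ≤ S.card :=
  Nat.sInf_le ⟨S, h, rfl⟩

/-- Removing an arc changes `γ⁺ₘ` by at most one upwards:
`k ≤ γ⁺ₘ(D - e) ≤ k + 1`. -/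
theorem stmt17 {V : Type*} [Fintype V] [DecidableEq V]
    (A : V → V → Prop) (hloop : ∀ v, ¬ A v v)
    (k : ℕ) (hk : gammaM A = k) (a b : V) (hab : A a b) :
    k ≤ gammaM (fun u v => A u v ∧ ¬ (u = a ∧ v = b)) ∧
      gammaM (fun u v => A u v ∧ ¬ (u = a ∧ v = b)) ≤ k + 1 := by

  set A' := fun u v => A u v ∧ ¬ (u = a ∧ v = b) with hA'
  constructor
  · -- k ≤ gammaM A'
    obtain ⟨S, hS, hcard⟩ := gammaM_exists A'
    have hAA : ∀ u v, A' u v → A u v := fun u v h => h.1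
    have hub : IsMODS A S := by
      unfold IsMODS at hS ⊢
      have := Finset.card_le_card (closedOut_mono_rel hAA S)
      omega
    have := gammaM_le hub
    omega
  · -- gammaM A' ≤ k + 1
    obtain ⟨S, hS, hcard⟩ := gammaM_exists A
    have hsub : closedOut A S ⊆ closedOut A' (insert b S) := by
      intro v hv
      simp only [closedOut, Finset.mem_union, Finset.mem_filter, Finset.mem_univ,
        true_and, Finset.mem_insert] at hv ⊢
      rcases hv with hv | ⟨u, hu, huv⟩
      · exact Or.inl (Or.inr hv)
      · by_cases hc : u = a ∧ v = b
        · exact Or.inl (Or.inl hc.2)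
        · exact Or.inr ⟨u, Or.inr hu, huv, hc⟩
    have hub : IsMODS A' (insert b S) := by
      unfold IsMODS at hS ⊢
      have := Finset.card_le_card hsub
      omega
    have h1 := gammaM_le hub
    have h2 : (insert b S).card ≤ S.card + 1 := Finset.card_insert_le _ _
    omega
end
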